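/- arXiv:2409.10924 — 2 statements merged into one kernel-verified Lean document; each statement's English description precedes it below -/
import Mathlib

section
/- For any path P in G_{x,y} from v_{n,m} to v_{0,0}, the number of type-1 arcs plus the number of type-3 arcs in P equals d(x,y). -/
open Classical

variable {α : Type*}

/-- One single-symbol insertion or deletion step between sequences. -/
def EditStep (x y : List α) : Prop :=
  (∃ i a, y = x.insertIdx i a) ∨ (∃ i a, x = y.insertIdx i a)

/-- The indel distance: the minimum number of single-symbol insertions and
deletions transforming `x` into `y`. -/
noncomputable def indel (x y : List α) : ℕ :=
  sInf {n | ∃ f : ℕ → List α, f 0 = x ∧ f n = y ∧ ∀ i < n, EditStep (f i) (f (i + 1))}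

/-- The indel-distance table `h i j = d(x_[1..i], y_[1..j])`. -/
noncomputable def hh (x y : List α) (i j : ℕ) : ℕ :=
  indel (x.take i) (y.take j)

/-- Delete the (1-indexed) positions in the finite set `S` from `x`. -/
def delF (x : List α) (S : Finset ℕ) : List α :=
  (((List.range x.length).zip x).filter fun p => p.1 + 1 ∉ S).map Prod.snd

/-- Delete the (1-indexed) positions in the set `S` from `x`. -/
noncomputable def delS (x : List α) (S : Set ℕ) : List α :=
  (((List.range x.length).zip x).filter fun p => decide (p.1 + 1 ∉ S)).map Prod.snd

/-- Type-1 arc `(v_{i,j}, v_{i-1,j})` when `h i j = h (i-1) j + 1`. -/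
def IsArc1 (x y : List α) (p q : ℕ × ℕ) : Prop :=
  1 ≤ p.1 ∧ p.1 ≤ x.length ∧ p.2 ≤ y.length ∧ q = (p.1 - 1, p.2) ∧
    hh x y p.1 p.2 = hh x y (p.1 - 1) p.2 + 1

/-- Type-2 arc `(v_{i,j}, v_{i-1,j-1})` when `x_i = y_j`. -/
def IsArc2 (x y : List α) (p q : ℕ × ℕ) : Prop :=
  1 ≤ p.1 ∧ p.1 ≤ x.length ∧ 1 ≤ p.2 ∧ p.2 ≤ y.length ∧ q = (p.1 - 1, p.2 - 1) ∧
    x[p.1 - 1]? = y[p.2 - 1]?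

/-- Type-3 arc `(v_{i,j}, v_{i,j-1})` when `h i j = h i (j-1) + 1`. -/
def IsArc3 (x y : List α) (p q : ℕ × ℕ) : Prop :=
  p.1 ≤ x.length ∧ 1 ≤ p.2 ∧ p.2 ≤ y.length ∧ q = (p.1, p.2 - 1) ∧
    hh x y p.1 p.2 = hh x y p.1 (p.2 - 1) + 1

/-- Arcs of the digraph `G_{x,y}`. -/
def IsArc (x y : List α) (p q : ℕ × ℕ) : Prop :=
  IsArc1 x y p q ∨ IsArc2 x y p q ∨ IsArc3 x y p q

/-- `P` is a path in `G_{x,y}` from `v_{n,m}` to `v_{0,0}`. -/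
def IsPath (x y : List α) (P : List (ℕ × ℕ)) : Prop :=
  P.Chain' (IsArc x y) ∧ P.head? = some (x.length, y.length) ∧ P.getLast? = some (0, 0)

/-- Number of arcs of a path `P` satisfying the arc predicate `A`. -/
noncomputable def countArc (A : ℕ × ℕ → ℕ × ℕ → Prop) (P : List (ℕ × ℕ)) : ℕ :=
  (P.zip P.tail).countP fun pq => decide (A pq.1 pq.2)

/-- First indices of the type-1 arcs of `P`. -/
def fD (x y : List α) (P : List (ℕ × ℕ)) : Set ℕ :=
  { i | ∃ pq ∈ P.zip P.tail, IsArc1 x y pq.1 pq.2 ∧ pq.1.1 = i }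

/-- Second indices of the type-3 arcs of `P`. -/
def fI (x y : List α) (P : List (ℕ × ℕ)) : Set ℕ :=
  { j | ∃ pq ∈ P.zip P.tail, IsArc3 x y pq.1 pq.2 ∧ pq.1.2 = j }

/-- The single-deletion ball of `x`. -/
def delBall (x : List α) : Set (List α) :=
  { z | ∃ j, 1 ≤ j ∧ j ≤ x.length ∧ z = delF x {j} }

/-- `L^{(1)}(x)`: sequences (other than `x`) obtained from `x` by a single
insertion followed by a single deletion. -/
def L1 (x : List α) : Set (List α) :=
  { y | y ≠ x ∧ ∃ s, 1 ≤ s ∧ s ≤ x.length + 1 ∧ ∃ a : α, ∃ j, 1 ≤ j ∧ j ≤ x.length + 1 ∧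
      y = delF (x.insertIdx (s - 1) a) {j} }

/-- `x ∈ E_{n,q,t}`: any `t` deletion positions are uniquely detectable. -/
def Detects (x : List α) (t : ℕ) : Prop :=
  ∀ S S' : Finset ℕ, S ⊆ Finset.Icc 1 x.length → S' ⊆ Finset.Icc 1 x.length →
    S.card = t → S'.card = t → delF x S = delF x S' → S = S'

/-- `x` with the adjacent (1-indexed) symbols `x_i` and `x_{i+1}` swapped. -/
def swapAdj (x : List α) (i : ℕ) : List α :=
  x.take (i - 1) ++ ((x.drop (i - 1)).take 2).reverse ++ x.drop (i + 1)

/-- The partial order on paths of `G_{x,y}`. -/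
def PathLE (P Q : List (ℕ × ℕ)) : Prop :=
  ∀ j : ℕ, sInf {i | (i, j) ∈ P} ≤ sInf {i | (i, j) ∈ Q} ∧
    sSup {i | (i, j) ∈ P} ≤ sSup {i | (i, j) ∈ Q}

/-- The Wagner–Fischer matrix. -/
def wfH [DecidableEq α] (x y : List α) : ℕ → ℕ → ℕ
  | i, 0 => i
  | 0, j + 1 => j + 1
  | i + 1, j + 1 =>
      min (wfH x y (i + 1) j + 1)
        (min (wfH x y i (j + 1) + 1)
          (wfH x y i j + if x[i]? = y[j]? then 0 else 2))

/-!
Along an arc of `G_{x,y}` the table value `h` drops by one on type-1 and type-3 arcs and stays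
put on type-2 arcs, so along a path from `v_{n,m}` to `v_{0,0}` the number of type-1 and type-3
arcs telescopes to `h_{n,m} - h_{0,0} = d(x,y)`.

The type-2 case is `d(a ++ [c], b ++ [c]) = d(a, b)`, which follows from
`d(x,y) = |x| + |y| - 2 lcs(x,y)`: editing through a common subsequence `z` costs
`|x| + |y| - 2|z|`, and conversely along any edit path each step shortens the best common
subsequence by at most one.
-/

theorem EditStep.symm {x y : List α} (h : EditStep x y) : EditStep y x :=
  Or.symm h

theorem EditStep.cons (a : α) {x y : List α} (h : EditStep x y) :
    EditStep (a :: x) (a :: y) := by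
  rcases h with ⟨i, b, rfl⟩ | ⟨i, b, rfl⟩
  · exact Or.inl ⟨i + 1, b, rfl⟩
  · exact Or.inr ⟨i + 1, b, rfl⟩

theorem EditStep.sublist_or_sublist {x y : List α} (h : EditStep x y) :
    (x.Sublist y ∧ y.length ≤ x.length + 1) ∨
      (y.Sublist x ∧ x.length ≤ y.length + 1) := by
  rcases h with ⟨i, b, rfl⟩ | ⟨i, b, rfl⟩
  · exact Or.inl ⟨List.sublist_insertIdx x i b, List.length_insertIdx_le_succ⟩
  · exact Or.inr ⟨List.sublist_insertIdx y i b, List.length_insertIdx_le_succ⟩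

theorem List.exists_common_sublist_of_sublist {z u v : List α} (hz : z.Sublist v)
    (hu : u.Sublist v) :
    ∃ w : List α, w.Sublist z ∧ w.Sublist u ∧
      z.length + u.length ≤ w.length + v.length := by
  induction v generalizing z u with
  | nil =>
    rw [List.sublist_nil] at hz hu
    subst hz hu
    exact ⟨[], List.Sublist.refl _, List.Sublist.refl _, le_rfl⟩
  | cons c v ih =>
    rcases List.sublist_cons_iff.mp hz with hz' | ⟨z, rfl, hz'⟩ <;>
      rcases List.sublist_cons_iff.mp hu with hu' | ⟨u, rfl, hu'⟩
    · obtain ⟨w, hwz, hwu, hlen⟩ := ih hz' hu'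
      exact ⟨w, hwz, hwu, by simp only [List.length_cons]; omega⟩
    · obtain ⟨w, hwz, hwu, hlen⟩ := ih hz' hu'
      exact ⟨w, hwz, hwu.cons c, by simp only [List.length_cons]; omega⟩
    · obtain ⟨w, hwz, hwu, hlen⟩ := ih hz' hu'
      exact ⟨w, hwz.cons c, hwu, by simp only [List.length_cons]; omega⟩
    · obtain ⟨w, hwz, hwu, hlen⟩ := ih hz' hu'
      exact ⟨c :: w, hwz.cons_cons c, hwu.cons_cons c, by simp only [List.length_cons]; omega⟩

def EditReach (n : ℕ) (x y : List α) : Prop :=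
  ∃ f : ℕ → List α, f 0 = x ∧ f n = y ∧ ∀ i < n, EditStep (f i) (f (i + 1))

namespace EditReach

theorem refl (x : List α) : EditReach 0 x x :=
  ⟨fun _ => x, rfl, rfl, fun _ hi => absurd hi (Nat.not_lt_zero _)⟩

theorem single {x y : List α} (h : EditStep x y) : EditReach 1 x y :=
  ⟨fun i => if i = 0 then x else y, rfl, rfl, fun i hi => by
    obtain rfl : i = 0 := by omega
    simpa using h⟩

theorem symm {n : ℕ} {x y : List α} (h : EditReach n x y) : EditReach n y x := by
  obtain ⟨f, hx, hy, hs⟩ := h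
  refine ⟨fun i => f (n - i), by simpa using hy, by simpa using hx, fun i hi => ?_⟩
  have hstep := hs (n - (i + 1)) (by omega)
  rw [show n - (i + 1) + 1 = n - i by omega] at hstep
  exact hstep.symm

theorem trans {n m : ℕ} {x y z : List α} (h₁ : EditReach n x y) (h₂ : EditReach m y z) :
    EditReach (n + m) x z := by
  obtain ⟨f, hfx, hfy, hf⟩ := h₁
  obtain ⟨g, hgy, hgz, hg⟩ := h₂
  refine ⟨fun i => if i < n then f i else g (i - n), ?_, ?_, fun i hi => ?_⟩
  · rcases Nat.eq_zero_or_pos n with rfl | hn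
    · simp [hgy, ← hfx, ← hfy]
    · simp [hn, hfx]
  · simp [hgz]
  · rcases lt_trichotomy (i + 1) n with hlt | heq | hgt
    · simpa [hlt, show i < n by omega] using hf i (by omega)
    · simpa [show i < n by omega, heq, hgy, ← hfy] using hf i (by omega)
    · simpa [show ¬i < n by omega, show ¬i + 1 < n by omega,
        show i + 1 - n = i - n + 1 by omega] using hg (i - n) (by omega)

theorem cons (a : α) {n : ℕ} {x y : List α} (h : EditReach n x y) :
    EditReach n (a :: x) (a :: y) := by
  obtain ⟨f, hx, hy, hs⟩ := h
  exact ⟨fun i => a :: f i, by simp [hx], by simp [hy], fun i hi => (hs i hi).cons a⟩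

theorem of_sublist {x z : List α} (h : z.Sublist x) : EditReach (x.length - z.length) x z := by
  induction h with
  | slnil => exact refl []
  | @cons l₁ l₂ a h ih =>
    have hdel : EditStep (a :: l₂) l₂ := Or.inr ⟨0, a, rfl⟩
    convert (single hdel).trans ih using 1
    have := h.length_le
    simp only [List.length_cons]
    omega
  | @cons_cons l₁ l₂ a _ ih => simpa using ih.cons a

theorem exists_of_succ {n : ℕ} {x y : List α} (h : EditReach (n + 1) x y) :
    ∃ x', EditStep x x' ∧ EditReach n x' y := by
  obtain ⟨f, hx, hy, hs⟩ := h
  exact ⟨f 1, hx ▸ hs 0 (by omega),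
    fun i => f (i + 1), rfl, hy, fun i hi => hs (i + 1) (by omega)⟩

theorem exists_common_sublist {n : ℕ} {x y : List α} (h : EditReach n x y) :
    ∃ z : List α, z.Sublist x ∧ z.Sublist y ∧ x.length + y.length ≤ 2 * z.length + n := by
  induction n generalizing x with
  | zero =>
    obtain ⟨f, rfl, rfl, -⟩ := h
    exact ⟨f 0, List.Sublist.refl _, List.Sublist.refl _, by omega⟩
  | succ n ih =>
    obtain ⟨x', hstep, hx'⟩ := h.exists_of_succ
    obtain ⟨z', hz'x', hz'y, hlen⟩ := ih hx'
    rcases hstep.sublist_or_sublist with ⟨hxx', hlen'⟩ | ⟨hx'x, hlen'⟩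
    · obtain ⟨w, hwz', hwx, hwlen⟩ := List.exists_common_sublist_of_sublist hz'x' hxx'
      exact ⟨w, hwx, hwz'.trans hz'y, by omega⟩
    · exact ⟨z', hz'x'.trans hx'x, hz'y, by omega⟩

end EditReach

theorem indel_le {n : ℕ} {x y : List α} (h : EditReach n x y) : indel x y ≤ n :=
  Nat.sInf_le h

theorem editReach_indel (x y : List α) : EditReach (indel x y) x y :=
  Nat.sInf_mem (s := {n | EditReach n x y}) ⟨_, (EditReach.of_sublist (List.nil_sublist x)).trans
    (EditReach.of_sublist (List.nil_sublist y)).symm⟩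

theorem indel_add_two_mul_length_le {x y z : List α} (hx : z.Sublist x) (hy : z.Sublist y) :
    indel x y + 2 * z.length ≤ x.length + y.length := by
  have := indel_le ((EditReach.of_sublist hx).trans (EditReach.of_sublist hy).symm)
  have := hx.length_le
  have := hy.length_le
  omega

theorem List.Sublist.dropLast {l₁ l₂ : List α} (h : l₁.Sublist l₂) :
    l₁.dropLast.Sublist l₂.dropLast := by
  simpa using h.reverse.tail

theorem indel_append_singleton (x y : List α) (c : α) :
    indel (x ++ [c]) (y ++ [c]) = indel x y := by
  apply le_antisymm
  · obtain ⟨z, hzx, hzy, hlen⟩ := (editReach_indel x y).exists_common_sublist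
    have := indel_add_two_mul_length_le (hzx.append (List.Sublist.refl [c]))
      (hzy.append (List.Sublist.refl [c]))
    simp only [List.length_append, List.length_singleton] at this
    omega
  · obtain ⟨z, hzx, hzy, hlen⟩ := (editReach_indel (x ++ [c]) (y ++ [c])).exists_common_sublist
    have := indel_add_two_mul_length_le (by simpa using hzx.dropLast) (by simpa using hzy.dropLast)
    simp only [List.length_append, List.length_singleton] at hlen
    simp only [List.length_dropLast] at this
    omega

theorem hh_zero_zero (x y : List α) : hh x y 0 0 = 0 :=
  Nat.le_zero.mp (indel_le (EditReach.refl []))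

theorem hh_length_length (x y : List α) : hh x y x.length y.length = indel x y := by
  simp only [hh, List.take_length]

theorem hh_add_one_add_one {x y : List α} {i j : ℕ} (hi : i < x.length) (h : x[i]? = y[j]?) :
    hh x y (i + 1) (j + 1) = hh x y i j := by
  simp only [hh, List.take_add_one, ← h, List.getElem?_eq_getElem hi, Option.toList_some,
    indel_append_singleton]

section Arcs

variable {x y : List α} {p q : ℕ × ℕ}

theorem IsArc1.not_isArc3 (h : IsArc1 x y p q) : ¬IsArc3 x y p q := by
  rintro ⟨-, -, -, hq, -⟩
  obtain ⟨hp, -, -, rfl, -⟩ := h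
  simp only [Prod.ext_iff] at hq
  omega

theorem IsArc2.not_isArc1 (h : IsArc2 x y p q) : ¬IsArc1 x y p q := by
  rintro ⟨-, -, -, hq, -⟩
  obtain ⟨-, -, hp, -, rfl, -⟩ := h
  simp only [Prod.ext_iff] at hq
  omega

theorem IsArc2.not_isArc3 (h : IsArc2 x y p q) : ¬IsArc3 x y p q := by
  rintro ⟨-, -, -, hq, -⟩
  obtain ⟨hp, -, -, -, rfl, -⟩ := h
  simp only [Prod.ext_iff] at hq
  omega

theorem IsArc3.not_isArc1 (h : IsArc3 x y p q) : ¬IsArc1 x y p q := by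
  rintro ⟨-, -, -, hq, -⟩
  obtain ⟨-, hp, -, rfl, -⟩ := h
  simp only [Prod.ext_iff] at hq
  omega

theorem IsArc2.hh_eq (h : IsArc2 x y p q) : hh x y p.1 p.2 = hh x y q.1 q.2 := by
  obtain ⟨hi, hix, hj, -, rfl, heq⟩ := h
  obtain ⟨i, j⟩ := p
  obtain ⟨i, rfl⟩ := Nat.exists_eq_add_of_le' hi
  obtain ⟨j, rfl⟩ := Nat.exists_eq_add_of_le' hj
  exact hh_add_one_add_one hix heq

theorem hh_eq_of_isArc (h : IsArc x y p q) :
    hh x y p.1 p.2 =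
      hh x y q.1 q.2 + ((if IsArc1 x y p q then 1 else 0) + if IsArc3 x y p q then 1 else 0) := by
  rcases h with h | h | h
  · rw [if_pos h, if_neg h.not_isArc3]
    exact h.2.2.2.2.trans (by rw [h.2.2.2.1])
  · rw [if_neg h.not_isArc1, if_neg h.not_isArc3]
    exact h.hh_eq
  · rw [if_neg h.not_isArc1, if_pos h]
    exact h.2.2.2.2.trans (by rw [h.2.2.2.1])

end Arcs

theorem countArc_cons_cons (A : ℕ × ℕ → ℕ × ℕ → Prop) (p q : ℕ × ℕ)
    (P : List (ℕ × ℕ)) :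
    countArc A (p :: q :: P) = countArc A (q :: P) + if A p q then 1 else 0 := by
  simp [countArc, List.countP_cons]

theorem countArc_add_countArc_add_hh {x y : List α} {P : List (ℕ × ℕ)} {p r : ℕ × ℕ}
    (hP : (p :: P).IsChain (IsArc x y)) (hr : (p :: P).getLast? = some r) :
    countArc (IsArc1 x y) (p :: P) + countArc (IsArc3 x y) (p :: P) + hh x y r.1 r.2 =
      hh x y p.1 p.2 := by
  induction P generalizing p with
  | nil =>
    obtain rfl : p = r := by simpa using hr
    simp [countArc]
  | cons q P ih =>
    obtain ⟨hpq, hP⟩ := List.isChain_cons_cons.mp hP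
    rw [List.getLast?_cons_cons] at hr
    rw [countArc_cons_cons, countArc_cons_cons, hh_eq_of_isArc hpq, ← ih hP hr]
    omega

/-- the number of type-1 plus type-3 arcs of any path equals `d(x,y)`. -/
theorem count_type1_add_type3 {α : Type*} (x y : List α) (P : List (ℕ × ℕ))
    (hP : IsPath x y P) :
    countArc (IsArc1 x y) P + countArc (IsArc3 x y) P = indel x y := by
  obtain ⟨hchain, hhead, hlast⟩ := hP
  obtain ⟨p, P, rfl⟩ := List.exists_cons_of_ne_nil (l := P) (by rintro rfl; simp at hhead)
  obtain rfl : p = (x.length, y.length) := by simpa using hhead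
  have := countArc_add_countArc_add_hh hchain hlast
  rwa [hh_zero_zero, add_zero, hh_length_length] at this
end

section
/- The monotonically increasing periodic sequence m ∈ Z_{t+1}^n defined by m_i = (i−1) mod (t+1) can uniquely detect t deletion indices: for any S, S' ⊆ [n] with |S| = |S'| = t, D_S(m) = D_{S'}(m) implies S = S'. -/
open Classical

variable {α : Type*}

/-!
Deleting `t` positions from `m = (i mod (t + 1))ᵢ` keeps the values at the surviving indices
`j₀ < j₁ < ⋯`. At most `t` indices are missing, so `k ≤ jₖ ≤ k + t`: each `jₖ` lies in a window of
`t + 1` consecutive integers and is therefore determined by its residue `jₖ mod (t + 1)`, the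
`k`-th entry of `D_S(m)`. Hence `D_S(m)` determines the surviving indices, and with them `S`.
-/

namespace List

theorem Nodup.length_le_card_of_forall_mem {l : List α} {s : Finset α} (hl : l.Nodup)
    (hs : ∀ x ∈ l, x ∈ s) : l.length ≤ s.card := by
  rw [← toFinset_card_of_nodup hl]
  exact Finset.card_le_card fun x hx => hs x (mem_toFinset.mp hx)

variable {l : List ℕ} {n : ℕ}

theorem Pairwise.getElem_bounds (hl : l.Pairwise (· < ·)) (hn : ∀ x ∈ l, x < n) (k : ℕ)
    (hk : k < l.length) : k ≤ l[k] ∧ l[k] + (l.length - k) ≤ n := by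
  have hsplit : l = l.take k ++ l[k] :: l.drop (k + 1) := by
    rw [← drop_eq_getElem_cons, take_append_drop]
  have hl' := hl
  rw [hsplit, pairwise_append, pairwise_cons] at hl'
  obtain ⟨-, ⟨hafter, -⟩, hbefore⟩ := hl'
  have hnd : l.Nodup := hl.imp ne_of_lt
  have hk_le : (l.take k).length ≤ (Finset.range l[k]).card :=
    (hnd.sublist (take_sublist k l)).length_le_card_of_forall_mem fun x hx =>
      Finset.mem_range.mpr (hbefore x hx l[k] mem_cons_self)
  have hrest : (l.drop (k + 1)).length ≤ (Finset.Ico (l[k] + 1) n).card :=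
    (hnd.sublist (drop_sublist _ l)).length_le_card_of_forall_mem fun x hx =>
      Finset.mem_Ico.mpr ⟨hafter x hx, hn x (mem_of_mem_drop hx)⟩
  simp only [length_take, length_drop, Finset.card_range, Nat.card_Ico] at hk_le hrest
  have := hn l[k] (getElem_mem hk)
  omega

theorem eq_of_map_mod_eq {l₁ l₂ : List ℕ} {t : ℕ} (h₁ : l₁.Pairwise (· < ·))
    (h₂ : l₂.Pairwise (· < ·)) (hn₁ : ∀ x ∈ l₁, x < n) (hn₂ : ∀ x ∈ l₂, x < n)
    (hlen : n ≤ l₁.length + t) (h : l₁.map (· % (t + 1)) = l₂.map (· % (t + 1))) : l₁ = l₂ := by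
  have hlength : l₁.length = l₂.length := by simpa using congrArg length h
  refine ext_getElem hlength fun k hk₁ hk₂ => ?_
  have hmod : l₁[k] % (t + 1) = l₂[k] % (t + 1) := by
    simpa [getElem?_eq_getElem hk₁, getElem?_eq_getElem hk₂] using congrArg (·[k]?) h
  -- both entries lie in the window `[k, k + t]`
  obtain ⟨lo₁, hi₁⟩ := h₁.getElem_bounds hn₁ k hk₁
  obtain ⟨lo₂, hi₂⟩ := h₂.getElem_bounds hn₂ k hk₂
  refine Nat.ModEq.eq_of_abs_lt hmod (abs_sub_lt_iff.mpr ⟨?_, ?_⟩) <;> omega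

end List

/-- The positions `0, …, n - 1` (0-indexed) that survive the deletion of the 1-indexed
positions in `S`. -/
def keptIndices (n : ℕ) (S : Finset ℕ) : List ℕ :=
  (List.range n).filter (· + 1 ∉ S)

section keptIndices

variable {n : ℕ} {S : Finset ℕ}

@[simp]
theorem mem_keptIndices {i : ℕ} : i ∈ keptIndices n S ↔ i < n ∧ i + 1 ∉ S := by
  simp [keptIndices]

theorem keptIndices_pairwise_lt : (keptIndices n S).Pairwise (· < ·) :=
  List.pairwise_lt_range.sublist List.filter_sublist

theorem le_length_keptIndices_add_card : n ≤ (keptIndices n S).length + S.card := by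
  have hsplit : n = (keptIndices n S).length + ((List.range n).filter (· + 1 ∈ S)).length := by
    simpa [keptIndices, List.countP_eq_length_filter] using
      List.length_eq_countP_add_countP (· + 1 ∉ S) (l := List.range n)
  have hdeleted : (((List.range n).filter (· + 1 ∈ S)).map (· + 1)).length ≤ S.card :=
    ((List.nodup_range.filter _).map fun _ _ => Nat.succ_inj.mp).length_le_card_of_forall_mem
      fun _ hx => by
        obtain ⟨i, hi, rfl⟩ := List.mem_map.mp hx
        simpa using (List.mem_filter.mp hi).2
  rw [List.length_map] at hdeleted
  omega

theorem eq_of_keptIndices_eq {S' : Finset ℕ} (hS : S ⊆ Finset.Icc 1 n) (hS' : S' ⊆ Finset.Icc 1 n)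
    (h : keptIndices n S = keptIndices n S') : S = S' := by
  have hmem : ∀ T ⊆ Finset.Icc 1 n, ∀ a, a ∈ T ↔ 1 ≤ a ∧ a ≤ n ∧ a - 1 ∉ keptIndices n T := by
    intro T hT a
    constructor
    · intro ha
      obtain ⟨h1, h2⟩ := Finset.mem_Icc.mp (hT ha)
      simp [Nat.sub_add_cancel h1, ha, h1, h2]
    · rintro ⟨h1, h2, hk⟩
      by_contra ha
      exact hk (mem_keptIndices.mpr ⟨by omega, by rwa [Nat.sub_add_cancel h1]⟩)
  ext a
  rw [hmem S hS, hmem S' hS', h]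

end keptIndices

theorem delF_map_range (f : ℕ → α) (n : ℕ) (S : Finset ℕ) :
    delF ((List.range n).map f) S = (keptIndices n S).map f := by
  have hzip : (List.range n).zip ((List.range n).map f) = (List.range n).map fun i => (i, f i) :=
    List.ext_getElem (by simp) fun i _ _ => by simp
  simp only [delF, List.length_map, List.length_range, hzip, List.filter_map, List.map_map]
  rfl

/-- the monotonically increasing periodic sequence detects `t`
deletion indices. -/
theorem periodic_detects (n t : ℕ) :
    Detects ((List.range n).map (· % (t + 1))) t := by
  intro S S' hS hS' hcard _ hdel
  rw [List.length_map, List.length_range] at hS hS'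
  rw [delF_map_range, delF_map_range] at hdel
  have hkept : n ≤ (keptIndices n S).length + t := hcard ▸ le_length_keptIndices_add_card
  exact eq_of_keptIndices_eq hS hS' (List.eq_of_map_mod_eq keptIndices_pairwise_lt
    keptIndices_pairwise_lt (fun _ hx => (mem_keptIndices.mp hx).1)
    (fun _ hx => (mem_keptIndices.mp hx).1) hkept hdel)
end
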